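/- arXiv:2504.03272 — 3 statements merged into one kernel-verified Lean document; each statement's English description precedes it below -/
import Mathlib

section
/- Suppose the ego car is behind at position x_e with velocity 0 ≤ v_e, acceleration a_e with B_min ≤ a_e, reacts after at most time T > 0, and v_e + a_e·T ≥ 0. If x_e - v_e²/(2·B_min) + (−a_e/B_min + 1)·((a_e/2)·T² + T·v_e) + L < x_l - v_l²/(2·B_max), then after driving for any time 0 ≤ t ≤ T with acceleration a_e (reaching position x_e' = x_e + v_e·t + (a_e/2)·t² and velocity v_e' = v_e + a_e·t ≥ 0), while the front car brakes at B_max for time t (clamped at its stop), the condition x_e' - (v_e')²/(2·B_min) + L < x_l' - (v_l')²/(2·B_max) still holds, where x_l', v_l' are the front car's position and velocity after time t. -/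
/-!
Both cars are compared through their stopping points `x - v ^ 2 / (2 * B)`. The front car's
stopping point does not move while it brakes. The ego car's stopping point, estimated with
`Bmin`, grows by `(1 - a / Bmin)` times the distance driven, and since its velocity stays
nonnegative on `[0, T]` that distance is largest at `t = T`: this bound is the correction term.
-/

/-- Position under constant deceleration, clamped at the stopping time. -/
noncomputable def brakePos (x v a t : ℝ) : ℝ :=
  if t ≤ -v / a then x + v * t + (a / 2) * t ^ 2 else x - v ^ 2 / (2 * a)

/-- Velocity under constant deceleration, clamped at 0. -/
noncomputable def brakeVel (v a t : ℝ) : ℝ :=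
  if t ≤ -v / a then v + a * t else 0

theorem brakePos_sub_brakeVel_sq_div (x v a t : ℝ) (ha : a ≠ 0) :
    brakePos x v a t - brakeVel v a t ^ 2 / (2 * a) = x - v ^ 2 / (2 * a) := by
  unfold brakePos brakeVel
  split_ifs
  · field_simp
    ring
  · simp

theorem pos_sub_vel_sq_div_eq (x v a B s : ℝ) (hB : B ≠ 0) :
    x + v * s + a / 2 * s ^ 2 - (v + a * s) ^ 2 / (2 * B)
      = x - v ^ 2 / (2 * B) + (-a / B + 1) * (a / 2 * s ^ 2 + s * v) := by
  field_simp
  ring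

section ConstantAcceleration

variable {v a t T : ℝ}

theorem vel_nonneg_of_mem_Icc (hv : 0 ≤ v) (hvT : 0 ≤ v + a * T) (ht : 0 ≤ t) (htT : t ≤ T) :
    0 ≤ v + a * t := by
  rcases le_total 0 a with ha | ha
  · linarith [mul_nonneg ha ht]
  · linarith [mul_le_mul_of_nonpos_left htT ha]

theorem displacement_le_of_mem_Icc (hv : 0 ≤ v) (hvT : 0 ≤ v + a * T) (ht : 0 ≤ t)
    (htT : t ≤ T) : a / 2 * t ^ 2 + t * v ≤ a / 2 * T ^ 2 + T * v := by
  -- The difference is `(T - t)` times the velocity at the midpoint `(t + T) / 2`.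
  have hmid : 0 ≤ v + a * ((t + T) / 2) :=
    vel_nonneg_of_mem_Icc hv hvT (by linarith) (by linarith)
  nlinarith [mul_nonneg (sub_nonneg.2 htT) hmid]

end ConstantAcceleration

theorem correction_preserved_general (xe ve ae xl vl Bmin Bmax T L : ℝ)
    (hve : 0 ≤ ve) (hBmax : Bmax ≤ Bmin) (hBmin : Bmin < 0)
    (ha : Bmin ≤ ae) (haT : ve + ae * T ≥ 0)
    (hsafe : xe - ve ^ 2 / (2 * Bmin)
        + (-ae / Bmin + 1) * ((ae / 2) * T ^ 2 + T * ve) + L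
        < xl - vl ^ 2 / (2 * Bmax)) :
    ∀ t : ℝ, 0 ≤ t → t ≤ T →
      0 ≤ ve + ae * t ∧
      (xe + ve * t + (ae / 2) * t ^ 2) - (ve + ae * t) ^ 2 / (2 * Bmin) + L
        < brakePos xl vl Bmax t - (brakeVel vl Bmax t) ^ 2 / (2 * Bmax) := by
  intro t ht htT
  refine ⟨vel_nonneg_of_mem_Icc hve haT ht htT, ?_⟩
  rw [brakePos_sub_brakeVel_sq_div _ _ _ _ (hBmax.trans_lt hBmin).ne,
    pos_sub_vel_sq_div_eq _ _ _ _ _ hBmin.ne]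
  have hfactor : 0 ≤ -ae / Bmin + 1 := by
    linarith [neg_div Bmin ae, (div_le_one_of_neg hBmin).2 ha]
  have hgrowth := mul_le_mul_of_nonneg_left (displacement_le_of_mem_Icc hve haT ht htT) hfactor
  linarith

/-- The correction-term safety condition is preserved throughout a control cycle. -/
theorem correction_preserved (xe ve ae xl vl Bmin Bmax T L : ℝ)
    (hve : 0 ≤ ve) (hvl : 0 ≤ vl) (hBmax : Bmax ≤ Bmin) (hBmin : Bmin < 0)
    (hT : 0 < T) (hL : 0 < L) (ha : Bmin ≤ ae) (haT : ve + ae * T ≥ 0)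
    (hsafe : xe - ve ^ 2 / (2 * Bmin)
        + (-ae / Bmin + 1) * ((ae / 2) * T ^ 2 + T * ve) + L
        < xl - vl ^ 2 / (2 * Bmax)) :
    ∀ t : ℝ, 0 ≤ t → t ≤ T →
      0 ≤ ve + ae * t ∧
      (xe + ve * t + (ae / 2) * t ^ 2) - (ve + ae * t) ^ 2 / (2 * Bmin) + L
        < brakePos xl vl Bmax t - (brakeVel vl Bmax t) ^ 2 / (2 * Bmax) :=
  correction_preserved_general xe ve ae xl vl Bmin Bmax T L hve hBmax hBmin ha haT hsafe
end

section
/- Formula safe_back is an inductive invariant of the braking dynamics: if B_max ≤ B_min < 0, a_e ≤ B_min, v_e, v_l ≥ 0, x_e + L ≤ x_l, and x_e - v_e²/(2·B_min) + L < x_l - v_l²/(2·B_max), then for any time t ≥ 0 during which the ego car evolves with acceleration a_e (velocity clamped at 0) and the front car evolves with acceleration B_max (velocity clamped at 0), the resulting state (x_e', v_e', x_l', v_l') again satisfies x_e' + L ≤ x_l' and x_e' - (v_e')²/(2·B_min) + L < x_l' - (v_l')²/(2·B_max). -/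
noncomputable def brakeStop (x v a : ℝ) : ℝ :=
  x - v ^ 2 / (2 * a)

section Braking

variable {x v a : ℝ}

lemma brakeVel_eq_min (ha : a ≠ 0) (t : ℝ) : brakeVel v a t = v + a * min t (-v / a) := by
  unfold brakeVel
  split_ifs with h
  · rw [min_eq_left h]
  · rw [min_eq_right (not_le.1 h).le]
    field_simp
    ring

lemma brakePos_eq_min (ha : a ≠ 0) (t : ℝ) :
    brakePos x v a t = x + v * min t (-v / a) + a / 2 * min t (-v / a) ^ 2 := by
  unfold brakePos
  split_ifs with h
  · rw [min_eq_left h]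
  · rw [min_eq_right (not_le.1 h).le]
    field_simp
    ring

lemma brakePos_zero (hv : 0 ≤ v) (ha : a < 0) : brakePos x v a 0 = x := by
  simp [brakePos, div_nonneg_of_nonpos (neg_nonpos.2 hv) ha.le]

lemma continuous_brakeVel (ha : a ≠ 0) : Continuous (brakeVel v a) := by
  simp only [funext (brakeVel_eq_min ha)]
  fun_prop

lemma brakeVel_nonneg (ha : a < 0) (t : ℝ) : 0 ≤ brakeVel v a t := by
  unfold brakeVel
  split_ifs with h
  · nlinarith [(le_div_iff_of_neg ha).1 h]
  · rfl

lemma brakeVel_le (hv : 0 ≤ v) (ha : a ≤ 0) {t : ℝ} (ht : 0 ≤ t) : brakeVel v a t ≤ v := by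
  unfold brakeVel
  split_ifs
  · nlinarith
  · exact hv

lemma le_neg_div_of_brakeVel_pos {t : ℝ} (h : 0 < brakeVel v a t) : t ≤ -v / a := by
  by_contra hlt
  simp [brakeVel, hlt] at h

lemma brakePos_sub_brakePos (ha : a ≠ 0) (s t : ℝ) :
    brakePos x v a t - brakePos x v a s =
      (min t (-v / a) - min s (-v / a)) * (brakeVel v a s + brakeVel v a t) / 2 := by
  rw [brakePos_eq_min ha, brakePos_eq_min ha, brakeVel_eq_min ha, brakeVel_eq_min ha]
  ring

lemma brakePos_sub_brakePos_of_le {s t : ℝ} (ha : a ≠ 0) (hst : s ≤ t) (ht : t ≤ -v / a) :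
    brakePos x v a t - brakePos x v a s = (t - s) * (brakeVel v a s + brakeVel v a t) / 2 := by
  rw [brakePos_sub_brakePos ha, min_eq_left ht, min_eq_left (hst.trans ht)]

lemma brakePos_sub_brakePos_le {s t : ℝ} (ha : a < 0) (hst : s ≤ t) :
    brakePos x v a t - brakePos x v a s ≤ (t - s) * (brakeVel v a s + brakeVel v a t) / 2 := by
  rw [brakePos_sub_brakePos ha.ne]
  have hmin : min t (-v / a) - min s (-v / a) ≤ t - s := by
    have := (le_abs_self _).trans (abs_min_sub_min_le_max t (-v / a) s (-v / a))
    rwa [sub_self, abs_zero, abs_of_nonneg (sub_nonneg.2 hst), max_eq_left (sub_nonneg.2 hst)]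
      at this
  gcongr
  exact add_nonneg (brakeVel_nonneg ha s) (brakeVel_nonneg ha t)

lemma brakeStop_brakePos (ha : a ≠ 0) (t : ℝ) :
    brakeStop (brakePos x v a t) (brakeVel v a t) a = brakeStop x v a := by
  rw [brakeStop, brakeStop, brakePos_eq_min ha, brakeVel_eq_min ha]
  field_simp
  ring

lemma brakeStop_brakePos_le {m t : ℝ} (ham : a ≤ m) (hm : m < 0) (hv : 0 ≤ v) (ht : 0 ≤ t) :
    brakeStop (brakePos x v a t) (brakeVel v a t) m ≤ brakeStop x v m := by
  have ha : a < 0 := ham.trans_lt hm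
  have hu := brakeStop_brakePos (x := x) (v := v) ha.ne t
  set u := brakeVel v a t
  have hsq : u ^ 2 ≤ v ^ 2 := pow_le_pow_left₀ (brakeVel_nonneg ha t) (brakeVel_le hv ha.le ht) 2
  have hinv : 1 / m ≤ 1 / a := one_div_le_one_div_of_neg_of_le hm ham
  have key : brakeStop (brakePos x v a t) u m - brakeStop x v m
      = (u ^ 2 - v ^ 2) * (1 / a - 1 / m) / 2 := by
    unfold brakeStop at hu ⊢
    field_simp at hu ⊢
    linear_combination hu
  nlinarith

end Braking

lemma add_lt_of_brakeStop_lt {p q u w m M L : ℝ} (hMm : M ≤ m) (hm : m < 0) (hw : 0 ≤ w)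
    (hwu : w ≤ u) (h : brakeStop p u m + L < brakeStop q w M) : p + L < q := by
  have hM : M < 0 := hMm.trans_lt hm
  have key : w ^ 2 / (-(2 * M)) ≤ u ^ 2 / (-(2 * m)) := by
    gcongr
    linarith
  unfold brakeStop at h
  rw [div_neg, div_neg] at key
  linarith

section SafeBack

variable {xe ve ae xl vl Bmin Bmax L : ℝ}

lemma brakeStop_lt_brakeStop (hBmin : Bmin < 0) (hBmax : Bmax < 0) (hae : ae ≤ Bmin)
    (hve : 0 ≤ ve) (hstop : brakeStop xe ve Bmin + L < brakeStop xl vl Bmax) {t : ℝ}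
    (ht : 0 ≤ t) :
    brakeStop (brakePos xe ve ae t) (brakeVel ve ae t) Bmin + L
      < brakeStop (brakePos xl vl Bmax t) (brakeVel vl Bmax t) Bmax := by
  calc brakeStop (brakePos xe ve ae t) (brakeVel ve ae t) Bmin + L
      ≤ brakeStop xe ve Bmin + L := by gcongr; exact brakeStop_brakePos_le hae hBmin hve ht
    _ < brakeStop xl vl Bmax := hstop
    _ = _ := (brakeStop_brakePos hBmax.ne t).symm

lemma brakePos_add_le_brakePos (hBmax : Bmax ≤ Bmin) (hBmin : Bmin < 0) (hae : ae < 0)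
    (hve : 0 ≤ ve) (hvl : 0 ≤ vl) (hinit : xe + L ≤ xl)
    (hstop : ∀ s, 0 ≤ s → brakeStop (brakePos xe ve ae s) (brakeVel ve ae s) Bmin + L
      < brakeStop (brakePos xl vl Bmax s) (brakeVel vl Bmax s) Bmax) {t : ℝ} (ht : 0 ≤ t) :
    brakePos xe ve ae t + L ≤ brakePos xl vl Bmax t := by
  have hM : Bmax < 0 := hBmax.trans_lt hBmin
  set D := fun s => brakeVel vl Bmax s - brakeVel ve ae s with hD
  have ahead_of_faster : ∀ s, 0 ≤ s → D s ≤ 0 → brakePos xe ve ae s + L < brakePos xl vl Bmax s :=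
    fun s hs hDs => add_lt_of_brakeStop_lt hBmax hBmin (brakeVel_nonneg hM s) (by linarith)
      (hstop s hs)
  rcases le_or_gt (D t) 0 with hDt | hDt
  · exact (ahead_of_faster t ht hDt).le
  have hmoving : t ≤ -vl / Bmax :=
    le_neg_div_of_brakeVel_pos (by linarith [brakeVel_nonneg (v := ve) hae t])
  obtain ⟨s, hs, hst, hDs, hgap⟩ : ∃ s, 0 ≤ s ∧ s ≤ t ∧ 0 ≤ D s ∧
      brakePos xe ve ae s + L ≤ brakePos xl vl Bmax s := by
    rcases le_or_gt 0 (D 0) with hD0 | hD0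
    · exact ⟨0, le_rfl, ht, hD0, by rwa [brakePos_zero hve hae, brakePos_zero hvl hM]⟩
    · have hcont : Continuous D :=
        (continuous_brakeVel hM.ne).sub (continuous_brakeVel hae.ne)
      obtain ⟨s, ⟨hs, hst⟩, hDs⟩ :=
        intermediate_value_Icc ht hcont.continuousOn ⟨hD0.le, hDt.le⟩
      exact ⟨s, hs, hst, hDs.ge, (ahead_of_faster s hs hDs.le).le⟩
  have hego := brakePos_sub_brakePos_le (x := xe) (v := ve) hae hst
  have hlead := brakePos_sub_brakePos_of_le (x := xl) hM.ne hst hmoving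
  have hgrowth : 0 ≤ (t - s) * (D s + D t) := mul_nonneg (by linarith) (by linarith)
  simp only [hD] at hgrowth
  linarith

end SafeBack

theorem safe_back_invariant_general (xe ve ae xl vl Bmin Bmax L : ℝ)
    (hBmax : Bmax ≤ Bmin) (hBmin : Bmin < 0) (hae : ae ≤ Bmin)
    (hve : 0 ≤ ve) (hvl : 0 ≤ vl)
    (hinit : xe + L ≤ xl)
    (hstop : xe - ve ^ 2 / (2 * Bmin) + L < xl - vl ^ 2 / (2 * Bmax)) :
    ∀ t : ℝ, 0 ≤ t →
      brakePos xe ve ae t + L ≤ brakePos xl vl Bmax t ∧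
      brakePos xe ve ae t - (brakeVel ve ae t) ^ 2 / (2 * Bmin) + L
        < brakePos xl vl Bmax t - (brakeVel vl Bmax t) ^ 2 / (2 * Bmax) := by
  have hstop_at : ∀ t, 0 ≤ t → brakeStop (brakePos xe ve ae t) (brakeVel ve ae t) Bmin + L
      < brakeStop (brakePos xl vl Bmax t) (brakeVel vl Bmax t) Bmax :=
    fun t ht => brakeStop_lt_brakeStop hBmin (hBmax.trans_lt hBmin) hae hve hstop ht
  exact fun t ht => ⟨brakePos_add_le_brakePos hBmax hBmin (hae.trans_lt hBmin) hve hvl hinit hstop_at ht,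
    hstop_at t ht⟩

/-- `safe_back` is an inductive invariant of the braking dynamics. -/
theorem safe_back_invariant (xe ve ae xl vl Bmin Bmax L : ℝ)
    (hBmax : Bmax ≤ Bmin) (hBmin : Bmin < 0) (hae : ae ≤ Bmin)
    (hve : 0 ≤ ve) (hvl : 0 ≤ vl) (hL : 0 < L)
    (hinit : xe + L ≤ xl)
    (hstop : xe - ve ^ 2 / (2 * Bmin) + L < xl - vl ^ 2 / (2 * Bmax)) :
    ∀ t : ℝ, 0 ≤ t →
      brakePos xe ve ae t + L ≤ brakePos xl vl Bmax t ∧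
      brakePos xe ve ae t - (brakeVel ve ae t) ^ 2 / (2 * Bmin) + L
        < brakePos xl vl Bmax t - (brakeVel vl Bmax t) ^ 2 / (2 * Bmax) :=
  safe_back_invariant_general xe ve ae xl vl Bmin Bmax L hBmax hBmin hae hve hvl hinit hstop
end

section
/- If the ego car (behind) has velocity v_e ≥ 0, acceleration a with B_min ≤ a and v_e + a·T < 0 (it stops within the reaction time T > 0), B_min < 0, and x_e - v_e²/(2a) + L < x_l - v_l²/(2·B_max) with a < 0, x_e + L ≤ x_l, v_l ≥ 0, B_max ≤ B_min, then for all t ≥ 0 the ego car evolving at acceleration a (clamped at stop) and the front car braking at B_max (clamped at stop) remain at separation at least L. -/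
theorem quadratic_nonneg_of_endpoints {c₀ c₁ c₂ s t : ℝ} (hc₂ : c₂ ≤ 0) (h₀ : 0 ≤ c₀)
    (hs : 0 ≤ c₀ + c₁ * s + c₂ * s ^ 2) (ht₀ : 0 ≤ t) (hts : t ≤ s) :
    0 ≤ c₀ + c₁ * t + c₂ * t ^ 2 := by
  have interp : s * (c₀ + c₁ * t + c₂ * t ^ 2)
      = (s - t) * c₀ + t * (c₀ + c₁ * s + c₂ * s ^ 2) - c₂ * s * t * (s - t) := by ring
  have hs₀ : 0 ≤ s := ht₀.trans hts
  have hst : 0 ≤ s - t := sub_nonneg.2 hts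
  rcases hs₀.eq_or_lt with rfl | hs_pos
  · obtain rfl : t = 0 := le_antisymm hts ht₀
    simpa using h₀
  · refine nonneg_of_mul_nonneg_right ?_ hs_pos
    rw [interp]
    linarith [mul_nonneg hst h₀, mul_nonneg ht₀ hs,
      mul_nonneg (mul_nonneg (mul_nonneg (neg_nonneg.2 hc₂) hs₀) ht₀) hst]

theorem brakePos_of_stopTime_le {x v c t : ℝ} (hc : c ≠ 0) (ht : -v / c ≤ t) :
    brakePos x v c t = x - v ^ 2 / (2 * c) := by
  unfold brakePos
  split_ifs with h
  · obtain rfl : t = -v / c := le_antisymm h ht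
    field_simp
    ring
  · rfl

theorem brakePos_le_stopPos {x v c : ℝ} (hc : c < 0) (t : ℝ) :
    brakePos x v c t ≤ x - v ^ 2 / (2 * c) := by
  unfold brakePos
  split_ifs
  · have hc₀ := hc.ne
    have hsq : x - v ^ 2 / (2 * c) - (x + v * t + c / 2 * t ^ 2)
        = -((v + c * t) ^ 2 / (2 * c)) := by
      field_simp
      ring
    have : (v + c * t) ^ 2 / (2 * c) ≤ 0 :=
      div_nonpos_of_nonneg_of_nonpos (sq_nonneg _) (by linarith)
    linarith
  · rfl

theorem brakePos_add_le_of_lead_stopped {xe ve a xl vl b L t : ℝ} (ha : a < 0) (hb : b < 0)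
    (hstop : xe - ve ^ 2 / (2 * a) + L ≤ xl - vl ^ 2 / (2 * b)) (ht : -vl / b ≤ t) :
    brakePos xe ve a t + L ≤ brakePos xl vl b t := by
  rw [brakePos_of_stopTime_le hb.ne ht]
  linarith [brakePos_le_stopPos (x := xe) (v := ve) ha t]

theorem brakePos_add_le_of_ego_stopped {xe ve a xl vl b L t : ℝ} (ha : a < 0) (hba : b ≤ a)
    (hve : 0 ≤ ve) (hinit : xe + L ≤ xl) (hu : -ve / a ≤ t) (hw : t ≤ -vl / b) :
    brakePos xe ve a t + L ≤ brakePos xl vl b t := by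
  have hb : b < 0 := hba.trans_lt ha
  have hu₀ : 0 ≤ -ve / a := div_nonneg_of_nonpos (by linarith) ha.le
  have ht₀ : 0 ≤ t := hu₀.trans hu
  have hvl : -b * t ≤ vl := by
    have := (le_div_iff_of_neg hb).1 hw
    linarith
  have stopDist : -(ve ^ 2 / (2 * a)) = (-a / 2) * (-ve / a) ^ 2 := by
    field_simp
  rw [brakePos_of_stopTime_le ha.ne hu, brakePos, if_pos hw]
  calc xe - ve ^ 2 / (2 * a) + L = xe + L + (-a / 2) * (-ve / a) ^ 2 := by rw [← stopDist]; ring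
    _ ≤ xl + (-a / 2) * t ^ 2 := by gcongr; linarith
    _ ≤ xl + (-b / 2) * t ^ 2 := by gcongr
    _ ≤ xl + vl * t + (b / 2) * t ^ 2 := by nlinarith [mul_le_mul_of_nonneg_right hvl ht₀]

theorem brakePos_add_le_of_both_moving {xe ve a xl vl b L s t : ℝ} (hba : b ≤ a)
    (hinit : xe + L ≤ xl) (hs : brakePos xe ve a s + L ≤ brakePos xl vl b s)
    (hsu : s ≤ -ve / a) (hsw : s ≤ -vl / b) (ht₀ : 0 ≤ t) (hts : t ≤ s) :
    brakePos xe ve a t + L ≤ brakePos xl vl b t := by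
  simp only [brakePos, if_pos hsu, if_pos hsw, if_pos (hts.trans hsu),
    if_pos (hts.trans hsw)] at hs ⊢
  have := quadratic_nonneg_of_endpoints (c₀ := xl - xe - L) (c₁ := vl - ve) (c₂ := (b - a) / 2)
    (by linarith) (by linarith) (by linarith) ht₀ hts
  linarith

theorem ego_stops_within_cycle_general (xe ve a xl vl Bmin Bmax L : ℝ)
    (hve : 0 ≤ ve) (hBmax : Bmax ≤ Bmin) (ha : a < 0) (haB : Bmin ≤ a)
    (hinit : xe + L ≤ xl)
    (hstop : xe - ve ^ 2 / (2 * a) + L < xl - vl ^ 2 / (2 * Bmax)) :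
    ∀ t : ℝ, 0 ≤ t → brakePos xe ve a t + L ≤ brakePos xl vl Bmax t := by
  have hBa : Bmax ≤ a := hBmax.trans haB
  have hB : Bmax < 0 := hBa.trans_lt ha
  have stopped : ∀ s, min (-ve / a) (-vl / Bmax) ≤ s →
      brakePos xe ve a s + L ≤ brakePos xl vl Bmax s := by
    intro s hs
    rcases le_or_gt (-vl / Bmax) s with hw | hw
    · exact brakePos_add_le_of_lead_stopped ha hB hstop.le hw
    · have hu : -ve / a ≤ s := (min_le_iff.1 hs).resolve_right hw.not_ge
      exact brakePos_add_le_of_ego_stopped ha hBa hve hinit hu hw.le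
  intro t ht
  rcases le_or_gt (min (-ve / a) (-vl / Bmax)) t with hst | hts
  · exact stopped t hst
  · exact brakePos_add_le_of_both_moving hBa hinit (stopped _ le_rfl) (min_le_left _ _)
      (min_le_right _ _) ht hts.le

/-- If the ego car stops within the reaction time, its own stopping distance
suffices: separation at least `L` is maintained for all time. -/
theorem ego_stops_within_cycle (xe ve a xl vl Bmin Bmax T L : ℝ)
    (hve : 0 ≤ ve) (hvl : 0 ≤ vl) (hBmax : Bmax ≤ Bmin) (hBmin : Bmin < 0)
    (hT : 0 < T) (hL : 0 < L) (ha : a < 0) (haB : Bmin ≤ a)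
    (hstopT : ve + a * T < 0)
    (hinit : xe + L ≤ xl)
    (hstop : xe - ve ^ 2 / (2 * a) + L < xl - vl ^ 2 / (2 * Bmax)) :
    ∀ t : ℝ, 0 ≤ t → brakePos xe ve a t + L ≤ brakePos xl vl Bmax t :=
  ego_stops_within_cycle_general xe ve a xl vl Bmin Bmax L hve hBmax ha haB hinit hstop
end
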